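/- Fix n ∈ ℕ. For p, p' ∈ 𝒫, x, y ∈ Punc(n, p) and x', y' ∈ Punc(n, p'): the composition E^n_p(x, y) ∘ E^n_{p'}(x', y') is empty if p ≠ p', is empty if p = p' and y ≠ x', and equals E^n_p(x, y') if p = p' and y = x'; moreover the transpose of E^n_p(x, y) is E^n_p(y, x). -/

import Mathlib

open Metric Set Pointwise

noncomputable section

/-- Points of `ℝ^d`. -/
abbrev Pt (d : ℕ) := EuclideanSpace ℝ (Fin d)

/-- A (possibly labelled) tile in `ℝ^d`: a subset of `ℝ^d` together with a label. -/
structure Tile (d : ℕ) where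
  carrier : Set (Pt d)
  label : ℕ

instance {d : ℕ} : Inhabited (Tile d) := ⟨⟨∅, 0⟩⟩

/-- Translate of a tile by a vector. -/
def Tile.translate {d : ℕ} (t : Tile d) (x : Pt d) : Tile d :=
  ⟨(fun y => y + x) '' t.carrier, t.label⟩

/-- A tile proper: homeomorphic to the closed unit ball. -/
def Tile.IsTile {d : ℕ} (t : Tile d) : Prop :=
  Nonempty (t.carrier ≃ₜ (Metric.closedBall (0 : Pt d) 1))

/-- Support of a partial tiling: the union of its tiles. -/
def psupp {d : ℕ} (P : Set (Tile d)) : Set (Pt d) := ⋃ t ∈ P, t.carrier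

/-- `tilesAt P U` = the tiles of `P` meeting `U`, written `P(U)` in the paper. -/
def tilesAt {d : ℕ} (P : Set (Tile d)) (U : Set (Pt d)) : Set (Tile d) :=
  {t ∈ P | (t.carrier ∩ U).Nonempty}

/-- Translate of a collection of tiles. -/
def translateSet {d : ℕ} (P : Set (Tile d)) (x : Pt d) : Set (Tile d) :=
  (fun t => t.translate x) '' P

/-- A partial tiling: tiles with pairwise disjoint interiors. -/
def IsPartialTiling {d : ℕ} (P : Set (Tile d)) : Prop :=
  (∀ t ∈ P, t.IsTile) ∧
  ∀ t ∈ P, ∀ t' ∈ P, t ≠ t' → interior t.carrier ∩ interior t'.carrier = ∅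

/-- A patch: a finite partial tiling. -/
def IsPatch {d : ℕ} (P : Set (Tile d)) : Prop := IsPartialTiling P ∧ P.Finite

/-- A tiling of all of `ℝ^d`. -/
def IsTilingOfSpace {d : ℕ} (P : Set (Tile d)) : Prop :=
  IsPartialTiling P ∧ psupp P = univ

/-- A substitution tiling system `(𝒫, ω)` with inflation constant `λ > 1`. -/
structure SubstSystem (d : ℕ) where
  proto : Set (Tile d)
  proto_finite : proto.Finite
  proto_nonempty : proto.Nonempty
  proto_isTile : ∀ p ∈ proto, p.IsTile
  proto_zero_mem : ∀ p ∈ proto, (0 : Pt d) ∈ interior p.carrier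
  proto_no_translate : ∀ p ∈ proto, ∀ q ∈ proto, ∀ x : Pt d,
    q = p.translate x → p = q ∧ x = 0
  lam : ℝ
  one_lt_lam : 1 < lam
  sub : Tile d → Set (Tile d)
  sub_patch : ∀ p ∈ proto, IsPatch (sub p)
  sub_proto : ∀ p ∈ proto, ∀ t ∈ sub p, ∃ q ∈ proto, ∃ x : Pt d, t = q.translate x
  sub_supp : ∀ p ∈ proto, psupp (sub p) = lam • p.carrier
  sub_translate : ∀ (t : Tile d) (x : Pt d),
    sub (t.translate x) = (fun s => s.translate (lam • x)) '' sub t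

namespace SubstSystem

variable {d : ℕ} (S : SubstSystem d)

/-- Tile-wise application of the substitution to a collection of tiles. -/
def subSet (P : Set (Tile d)) : Set (Tile d) := ⋃ t ∈ P, S.sub t

/-- Iterated substitution `ω^n` on collections of tiles. -/
def subIter (n : ℕ) (P : Set (Tile d)) : Set (Tile d) := (S.subSet)^[n] P

/-- `ω^n(t)` for a single tile `t`. -/
def omegan (n : ℕ) (t : Tile d) : Set (Tile d) := S.subIter n {t}

/-- The continuous hull `Ω`. -/
def Omega : Set (Set (Tile d)) :=
  {T | IsTilingOfSpace T ∧ ∀ P : Set (Tile d), P ⊆ T → IsPatch P →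
    ∃ n : ℕ, ∃ p ∈ S.proto, ∃ x : Pt d, P ⊆ translateSet (S.omegan n p) x}

/-- `x` is the puncture of the tile `t`, i.e. `t = p + x` for a prototile `p`. -/
def IsPuncture (t : Tile d) (x : Pt d) : Prop :=
  ∃ p ∈ S.proto, t = p.translate x

open Classical in
/-- The puncture `x(t)` of a tile `t` (chosen; unique for translates of prototiles). -/
def punc (t : Tile d) : Pt d :=
  if h : ∃ x : Pt d, S.IsPuncture t x then h.choose else 0

/-- The punctured hull (transversal) `Ω_punc`. -/
def OmegaPunc : Set (Set (Tile d)) :=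
  {T ∈ S.Omega | ∃ t ∈ T, S.IsPuncture t 0}

end SubstSystem

/-- The tiling metric. -/
def tilingDist {d : ℕ} (T T' : Set (Tile d)) : ℝ :=
  sInf ({1} ∪ {ε : ℝ | 0 < ε ∧ ∃ x x' : Pt d, ‖x‖ < ε ∧ ‖x'‖ < ε ∧
    tilesAt (translateSet T (-x)) (ball (0 : Pt d) (1 / ε)) =
      tilesAt (translateSet T' (-x')) (ball (0 : Pt d) (1 / ε))})

namespace SubstSystem

variable {d : ℕ} (S : SubstSystem d)

/-- Density of a family of tilings in `Ω_punc` w.r.t. the tiling metric. -/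
def DenseInPunc (E : Set (Set (Tile d))) : Prop :=
  ∀ T ∈ S.OmegaPunc, ∀ ε : ℝ, 0 < ε → ∃ T' ∈ E, tilingDist T T' < ε

/-- Openness of a subset of `Ω_punc` w.r.t. the tiling metric (subspace topology). -/
def OpenInPunc (E : Set (Set (Tile d))) : Prop :=
  E ⊆ S.OmegaPunc ∧ ∀ T ∈ E, ∃ ε : ℝ, 0 < ε ∧
    ∀ T' ∈ S.OmegaPunc, tilingDist T T' < ε → T' ∈ E

/-- The translational equivalence relation `R_punc` on `Ω_punc`. -/
def Rpunc : Set (Set (Tile d) × Set (Tile d)) :=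
  {TT | TT.1 ∈ S.OmegaPunc ∧ TT.2 ∈ S.OmegaPunc ∧ ∃ x : Pt d, TT.2 = translateSet TT.1 x}

/-- `Punc(n, p)`: the punctures of the tiles of `ω^n(p)`. -/
def Punc (n : ℕ) (p : Tile d) : Set (Pt d) :=
  {x | ∃ t ∈ S.omegan n p, S.IsPuncture t x}

/-- `E^n_p(x, y)`. -/
def Eset (n : ℕ) (p : Tile d) (x y : Pt d) : Set (Set (Tile d) × Set (Tile d)) :=
  {TT | ∃ T ∈ S.OmegaPunc, p ∈ T ∧
    TT.1 = translateSet (S.subIter n T) (-x) ∧ TT.2 = translateSet (S.subIter n T) (-y)}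

/-- `R_n`. -/
def Rn (n : ℕ) : Set (Set (Tile d) × Set (Tile d)) :=
  ⋃ p ∈ S.proto, ⋃ x ∈ S.Punc n p, ⋃ y ∈ S.Punc n p, S.Eset n p x y

/-- `R_AF = ∪ₙ R_n`. -/
def RAF : Set (Set (Tile d) × Set (Tile d)) := ⋃ n : ℕ, S.Rn n

/-- `U(P, t)`. -/
def Uset (P : Set (Tile d)) (t : Tile d) : Set (Set (Tile d)) :=
  {T ∈ S.OmegaPunc | translateSet P (-(S.punc t)) ⊆ T}

/-- `V(P, t₁, t₂)`. -/
def Vset (P : Set (Tile d)) (t₁ t₂ : Tile d) : Set (Set (Tile d) × Set (Tile d)) :=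
  {TT | TT.1 ∈ S.Uset P t₁ ∧ TT.2 = translateSet TT.1 (S.punc t₁ - S.punc t₂)}

/-- (A1) primitivity. -/
def Primitive : Prop :=
  ∃ N : ℕ, ∀ p ∈ S.proto, ∀ q ∈ S.proto, ∃ x : Pt d, Tile.translate q x ∈ S.omegan N p

/-- (A2) finite local complexity. -/
def FLC : Prop :=
  ∀ R : ℝ, 0 < R → ∃ Ps : Set (Set (Tile d)), Ps.Finite ∧
    ∀ P : Set (Tile d), IsPatch P → Metric.diam (psupp P) < R →
      (∃ T ∈ S.Omega, P ⊆ T) → ∃ P₀ ∈ Ps, ∃ x : Pt d, P = translateSet P₀ x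

/-- (A3) `ω : Ω → Ω` is bijective. -/
def SubBijective : Prop := Set.BijOn S.subSet S.Omega S.Omega

/-- (A4) `ω` forces its border. -/
def ForcesBorder : Prop :=
  ∃ n : ℕ, ∀ p ∈ S.proto, ∀ T ∈ S.Omega, ∀ T' ∈ S.Omega, ∀ x x' : Pt d,
    translateSet (S.omegan n p) x ⊆ T → translateSet (S.omegan n p) x' ⊆ T' →
    translateSet (tilesAt T ((fun y => y + x) '' psupp (S.omegan n p))) (-x) =
      translateSet (tilesAt T' ((fun y => y + x') '' psupp (S.omegan n p))) (-x')

/-- Prototile boundaries have box-counting dimension strictly less than `d`. -/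
def SmallBoundary : Prop :=
  ∃ c : ℝ, c < d ∧ ∃ K₀ : ℝ, ∀ p ∈ S.proto, ∀ ε : ℝ, 0 < ε →
    ∃ centers : Finset (Pt d), (centers.card : ℝ) ≤ K₀ * ε ^ (-c) ∧
      frontier p.carrier ⊆ ⋃ z ∈ centers, ball z ε

end SubstSystem

/-- A symmetry group action for `(𝒫, ω)`: `G ≤ O(d, ℝ)` acting on tiles, preserving
the prototile set and commuting with the substitution. -/
structure SymmAction {d : ℕ} (S : SubstSystem d) (G : Subgroup (Pt d ≃ₗᵢ[ℝ] Pt d)) where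
  act : G → Tile d → Tile d
  act_carrier : ∀ (g : G) (t : Tile d),
    (act g t).carrier = (g : Pt d ≃ₗᵢ[ℝ] Pt d) '' t.carrier
  act_one : ∀ t : Tile d, act 1 t = t
  act_mul : ∀ (g h : G) (t : Tile d), act (g * h) t = act g (act h t)
  act_proto : ∀ (g : G), ∀ p ∈ S.proto, act g p ∈ S.proto
  act_translate : ∀ (g : G) (t : Tile d) (x : Pt d),
    act g (t.translate x) = (act g t).translate ((g : Pt d ≃ₗᵢ[ℝ] Pt d) x)
  act_sub : ∀ (g : G), ∀ p ∈ S.proto, S.sub (act g p) = act g '' S.sub p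

/-- Action of a group element on a (partial) tiling: `gT = {gt : t ∈ T}`. -/
def SymmAction.actSet {d : ℕ} {S : SubstSystem d} {G : Subgroup (Pt d ≃ₗᵢ[ℝ] Pt d)}
    (σ : SymmAction S G) (g : G) (T : Set (Tile d)) : Set (Tile d) := σ.act g '' T

/-- `G` acts freely on the prototile set. -/
def SymmAction.FreeOnProto {d : ℕ} {S : SubstSystem d} {G : Subgroup (Pt d ≃ₗᵢ[ℝ] Pt d)}
    (σ : SymmAction S G) : Prop := ∀ g : G, ∀ p ∈ S.proto, σ.act g p = p → g = 1

/-- Composition of relations. -/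
def relComp {α : Type*} (R₁ R₂ : Set (α × α)) : Set (α × α) :=
  {q | ∃ z : α, (q.1, z) ∈ R₁ ∧ (z, q.2) ∈ R₂}

/-- Transpose (inverse) of a relation. -/
def relTrans {α : Type*} (R : Set (α × α)) : Set (α × α) := {q | (q.2, q.1) ∈ R}

end

/-! The transpose rule is immediate, and the composition rule for `p = p'`, `y = x'` follows from
injectivity of `ω^n` on `Ω` (A3). The content is that a composable pair forces `p = p'`
and `y = x'`. Since `ω^n(T + a) = ω^n(T) + λ^n a`, the equation `ω^n(T) - y = ω^n(T') - x'`
and injectivity give `T - λ⁻ⁿ y = T' - λ⁻ⁿ x' =: T₀`. In `T₀` the tiles `p - λ⁻ⁿ y` and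
`p' - λ⁻ⁿ x'` both have a substituted tile punctured at `0`, and `ω^n(u)` covers `λ^n u`, so both
contain `0` in their interiors. Interiors of distinct tiles of `T₀` are disjoint, so the two tiles
coincide, and as distinct prototiles are not translates of each other, `p = p'` and `y = x'`. -/

section

variable {d : ℕ}

lemma Tile.translate_carrier (t : Tile d) (a : Pt d) :
    (t.translate a).carrier = (fun y => y + a) '' t.carrier := rfl

@[simp]
lemma Tile.translate_zero (t : Tile d) : t.translate 0 = t := by
  cases t; simp [Tile.translate]

@[simp]
lemma Tile.translate_translate (t : Tile d) (a b : Pt d) :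
    (t.translate a).translate b = t.translate (a + b) := by
  simp only [Tile.translate, Set.image_image, add_assoc]

lemma Tile.translate_injective (a : Pt d) :
    Function.Injective (fun t : Tile d => t.translate a) := fun t s h => by
  simpa using congrArg (fun u : Tile d => u.translate (-a)) h

lemma interior_image_add_right (a : Pt d) (A : Set (Pt d)) :
    interior ((fun y => y + a) '' A) = (fun y => y + a) '' interior A := by
  simpa using ((Homeomorph.addRight a).image_interior A).symm

lemma Tile.IsTile.translate {t : Tile d} (h : t.IsTile) (a : Pt d) :
    (t.translate a).IsTile := by
  obtain ⟨e⟩ := h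
  have hcarrier : (t.translate a).carrier = Homeomorph.addRight a '' t.carrier := by
    simp [Tile.translate_carrier]
  exact ⟨(Homeomorph.setCongr hcarrier).trans
    (((Homeomorph.addRight a).image t.carrier).symm.trans e)⟩

lemma mem_translateSet {P : Set (Tile d)} {a : Pt d} {t : Tile d} :
    t ∈ translateSet P a ↔ ∃ s ∈ P, t = s.translate a := by
  simp [translateSet, eq_comm]

@[simp]
lemma translateSet_zero (P : Set (Tile d)) : translateSet P 0 = P := by
  simp [translateSet]

@[simp]
lemma translateSet_translateSet (P : Set (Tile d)) (a b : Pt d) :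
    translateSet (translateSet P a) b = translateSet P (a + b) := by
  simp [translateSet, Set.image_image]

lemma translateSet_injective (a : Pt d) :
    Function.Injective (fun P : Set (Tile d) => translateSet P a) :=
  Set.image_injective.mpr (Tile.translate_injective a)

lemma translateSet_singleton (t : Tile d) (a : Pt d) :
    translateSet {t} a = {t.translate a} := Set.image_singleton

lemma psupp_translateSet (P : Set (Tile d)) (a : Pt d) :
    psupp (translateSet P a) = (fun y => y + a) '' psupp P := by
  simp only [psupp, translateSet, Set.biUnion_image, Set.image_iUnion₂, Tile.translate_carrier]

lemma psupp_biUnion {ι : Type*} (I : Set ι) (A : ι → Set (Tile d)) :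
    psupp (⋃ i ∈ I, A i) = ⋃ i ∈ I, psupp (A i) := by
  simp only [psupp, Set.biUnion_iUnion]

lemma IsPartialTiling.translate {P : Set (Tile d)} (h : IsPartialTiling P) (a : Pt d) :
    IsPartialTiling (translateSet P a) := by
  refine ⟨?_, ?_⟩
  · rintro _ ⟨t, ht, rfl⟩
    exact (h.1 t ht).translate a
  · rintro _ ⟨t, ht, rfl⟩ _ ⟨t', ht', rfl⟩ hne
    have hne' : t ≠ t' := by rintro rfl; exact hne rfl
    rw [Tile.translate_carrier, Tile.translate_carrier, interior_image_add_right,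
      interior_image_add_right, ← Set.image_inter (add_left_injective a), h.2 t ht t' ht' hne',
      Set.image_empty]

lemma IsPartialTiling.eq_of_mem_interior {P : Set (Tile d)} (h : IsPartialTiling P)
    {t s : Tile d} (ht : t ∈ P) (hs : s ∈ P) {z : Pt d}
    (hzt : z ∈ interior t.carrier) (hzs : z ∈ interior s.carrier) : t = s := by
  by_contra hne
  simpa [h.2 t ht s hs hne] using Set.mem_inter hzt hzs

lemma IsPatch.translate {P : Set (Tile d)} (h : IsPatch P) (a : Pt d) :
    IsPatch (translateSet P a) := ⟨h.1.translate a, h.2.image _⟩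

lemma IsTilingOfSpace.translate {P : Set (Tile d)} (h : IsTilingOfSpace P) (a : Pt d) :
    IsTilingOfSpace (translateSet P a) := by
  refine ⟨h.1.translate a, ?_⟩
  rw [psupp_translateSet, h.2, Set.image_univ]
  exact (Equiv.addRight a).surjective.range_eq

namespace SubstSystem

variable (S : SubstSystem d)

lemma translateSet_mem_Omega {T : Set (Tile d)} (hT : T ∈ S.Omega) (a : Pt d) :
    translateSet T a ∈ S.Omega := by
  refine ⟨hT.1.translate a, fun P hPT hP => ?_⟩
  have hP' : translateSet P (-a) ⊆ T := by
    rintro _ ⟨t, htP, rfl⟩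
    obtain ⟨s, hs, rfl⟩ := mem_translateSet.mp (hPT htP)
    simpa using hs
  obtain ⟨m, q, hq, z, hsub⟩ := hT.2 _ hP' (hP.translate (-a))
  refine ⟨m, q, hq, z + a, ?_⟩
  have hsub' : translateSet (translateSet P (-a)) a ⊆
      translateSet (translateSet (S.omegan m q) z) a := Set.image_mono hsub
  simpa using hsub'

lemma eq_and_eq_of_translate_eq {p p' : Tile d} (hp : p ∈ S.proto) (hp' : p' ∈ S.proto)
    {a a' : Pt d} (h : p.translate a = p'.translate a') : p = p' ∧ a = a' := by
  have h' : p' = p.translate (a - a') := by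
    simpa [sub_eq_add_neg] using congrArg (fun t : Tile d => t.translate (-a')) h.symm
  obtain ⟨hpp', haa'⟩ := S.proto_no_translate p hp p' hp' (a - a') h'
  exact ⟨hpp', sub_eq_zero.mp haa'⟩

lemma puncture_mem_interior {t : Tile d} {z : Pt d} (h : S.IsPuncture t z) :
    z ∈ interior t.carrier := by
  obtain ⟨q, hq, rfl⟩ := h
  rw [Tile.translate_carrier, interior_image_add_right]
  exact ⟨0, S.proto_zero_mem q hq, zero_add z⟩

lemma subIter_succ (n : ℕ) (P : Set (Tile d)) :
    S.subIter (n + 1) P = S.subSet (S.subIter n P) :=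
  Function.iterate_succ_apply' _ _ _

lemma subSet_translateSet (P : Set (Tile d)) (a : Pt d) :
    S.subSet (translateSet P a) = translateSet (S.subSet P) (S.lam • a) := by
  simp only [subSet, translateSet, Set.biUnion_image, S.sub_translate, Set.image_iUnion₂]

lemma subIter_translateSet (n : ℕ) (P : Set (Tile d)) (a : Pt d) :
    S.subIter n (translateSet P a) = translateSet (S.subIter n P) (S.lam ^ n • a) := by
  induction n with
  | zero => simp [subIter]
  | succ n ih =>
    rw [S.subIter_succ, ih, S.subSet_translateSet, S.subIter_succ, smul_smul, ← pow_succ']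

lemma lam_pow_ne_zero (n : ℕ) : S.lam ^ n ≠ 0 :=
  pow_ne_zero n (zero_lt_one.trans S.one_lt_lam).ne'

lemma subIter_translateSet_inv_smul (n : ℕ) (P : Set (Tile d)) (a : Pt d) :
    S.subIter n (translateSet P ((S.lam ^ n)⁻¹ • a)) = translateSet (S.subIter n P) a := by
  rw [S.subIter_translateSet, smul_inv_smul₀ (S.lam_pow_ne_zero n)]

lemma subIter_mem_Omega (hA3 : S.SubBijective) (n : ℕ) {T : Set (Tile d)}
    (hT : T ∈ S.Omega) : S.subIter n T ∈ S.Omega := by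
  induction n with
  | zero => exact hT
  | succ n ih => rw [S.subIter_succ]; exact hA3.mapsTo ih

lemma subIter_injOn (hA3 : S.SubBijective) (n : ℕ) : Set.InjOn (S.subIter n) S.Omega := by
  induction n with
  | zero => exact fun T _ T' _ h => h
  | succ n ih =>
    intro T hT T' hT' h
    rw [S.subIter_succ, S.subIter_succ] at h
    exact ih hT hT' (hA3.injOn (S.subIter_mem_Omega hA3 n hT) (S.subIter_mem_Omega hA3 n hT') h)

lemma exists_isPuncture_of_mem_sub {t s : Tile d} {z : Pt d} (ht : S.IsPuncture t z)
    (hs : s ∈ S.sub t) : ∃ w, S.IsPuncture s w := by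
  obtain ⟨q, hq, rfl⟩ := ht
  rw [S.sub_translate] at hs
  obtain ⟨s, hs, rfl⟩ := hs
  obtain ⟨r, hr, w, rfl⟩ := S.sub_proto q hq s hs
  exact ⟨w + S.lam • z, r, hr, by simp⟩

lemma exists_isPuncture_of_mem_subIter (n : ℕ) {P : Set (Tile d)}
    (hP : ∀ t ∈ P, ∃ z, S.IsPuncture t z) : ∀ s ∈ S.subIter n P, ∃ w, S.IsPuncture s w := by
  induction n with
  | zero => exact hP
  | succ n ih =>
    rw [S.subIter_succ]
    intro s hs
    obtain ⟨t, ht, hst⟩ := Set.mem_iUnion₂.mp hs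
    obtain ⟨z, hz⟩ := ih t ht
    exact S.exists_isPuncture_of_mem_sub hz hst

lemma psupp_sub {t : Tile d} {z : Pt d} (h : S.IsPuncture t z) :
    psupp (S.sub t) = S.lam • t.carrier := by
  obtain ⟨q, hq, rfl⟩ := h
  rw [S.sub_translate, ← translateSet, psupp_translateSet, S.sub_supp q hq,
    Tile.translate_carrier, ← Set.image_smul, ← Set.image_smul, Set.image_image, Set.image_image]
  simp only [smul_add]

lemma psupp_subSet {P : Set (Tile d)} (hP : ∀ t ∈ P, ∃ z, S.IsPuncture t z) :
    psupp (S.subSet P) = S.lam • psupp P := by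
  rw [subSet, psupp_biUnion, psupp, Set.smul_set_iUnion₂]
  refine Set.iUnion₂_congr fun t ht => ?_
  obtain ⟨z, hz⟩ := hP t ht
  exact S.psupp_sub hz

lemma psupp_subIter (n : ℕ) {P : Set (Tile d)} (hP : ∀ t ∈ P, ∃ z, S.IsPuncture t z) :
    psupp (S.subIter n P) = S.lam ^ n • psupp P := by
  induction n with
  | zero => simp [subIter]
  | succ n ih =>
    rw [S.subIter_succ, S.psupp_subSet (S.exists_isPuncture_of_mem_subIter n hP), ih,
      smul_smul, ← pow_succ']

lemma inv_smul_mem_interior_of_mem_omegan {n : ℕ} {u s : Tile d} {a z : Pt d}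
    (hu : S.IsPuncture u a) (hs : s ∈ S.omegan n u) (hz : z ∈ interior s.carrier) :
    (S.lam ^ n)⁻¹ • z ∈ interior u.carrier := by
  have hsupp : psupp (S.omegan n u) = S.lam ^ n • u.carrier := by
    rw [omegan, S.psupp_subIter n (by rintro _ rfl; exact ⟨a, hu⟩)]
    simp [psupp]
  have hz' : z ∈ interior (S.lam ^ n • u.carrier) :=
    interior_mono (hsupp ▸ Set.subset_biUnion_of_mem (u := fun t : Tile d => t.carrier) hs) hz
  rw [interior_smul₀ (S.lam_pow_ne_zero n)] at hz'
  exact (Set.mem_smul_set_iff_inv_smul_mem₀ (S.lam_pow_ne_zero n) _ _).mp hz'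

lemma eq_of_mem_interior_omegan {T : Set (Tile d)} (hT : IsPartialTiling T) {n : ℕ}
    {u u' s s' : Tile d} {a a' z : Pt d} (hu : u ∈ T) (hu' : u' ∈ T)
    (hua : S.IsPuncture u a) (hua' : S.IsPuncture u' a')
    (hs : s ∈ S.omegan n u) (hs' : s' ∈ S.omegan n u')
    (hz : z ∈ interior s.carrier) (hz' : z ∈ interior s'.carrier) : u = u' :=
  hT.eq_of_mem_interior hu hu' (S.inv_smul_mem_interior_of_mem_omegan hua hs hz)
    (S.inv_smul_mem_interior_of_mem_omegan hua' hs' hz')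

lemma mem_omegan_translate {n : ℕ} {p s : Tile d} (hs : s ∈ S.omegan n p) (a : Pt d) :
    s.translate a ∈ S.omegan n (p.translate ((S.lam ^ n)⁻¹ • a)) := by
  rw [omegan, ← translateSet_singleton, S.subIter_translateSet_inv_smul]
  exact ⟨s, hs, rfl⟩

lemma eq_and_eq_of_translateSet_subIter_eq (hA3 : S.SubBijective) {n : ℕ}
    {p p' : Tile d} (hp : p ∈ S.proto) (hp' : p' ∈ S.proto)
    {y x' : Pt d} (hy : y ∈ S.Punc n p) (hx' : x' ∈ S.Punc n p')
    {T T' : Set (Tile d)} (hT : T ∈ S.Omega) (hT' : T' ∈ S.Omega) (hpT : p ∈ T) (hp'T' : p' ∈ T')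
    (h : translateSet (S.subIter n T) (-y) = translateSet (S.subIter n T') (-x')) :
    p = p' ∧ y = x' := by
  set c := (S.lam ^ n)⁻¹
  have hT₀ : translateSet T (c • -y) = translateSet T' (c • -x') := by
    refine S.subIter_injOn hA3 n (S.translateSet_mem_Omega hT _)
      (S.translateSet_mem_Omega hT' _) ?_
    rwa [S.subIter_translateSet_inv_smul, S.subIter_translateSet_inv_smul]
  obtain ⟨s, hs, q, hq, rfl⟩ := hy
  obtain ⟨s', hs', q', hq', rfl⟩ := hx'
  have hzero : ∀ r ∈ S.proto, (0 : Pt d) ∈ interior ((r.translate 0).carrier) :=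
    fun r hr => S.puncture_mem_interior ⟨r, hr, rfl⟩
  have hsame : p.translate (c • -y) = p'.translate (c • -x') :=
    S.eq_of_mem_interior_omegan (hT.1.1.translate _) ⟨p, hpT, rfl⟩
      (hT₀ ▸ ⟨p', hp'T', rfl⟩) ⟨p, hp, rfl⟩ ⟨p', hp', rfl⟩
      (S.mem_omegan_translate hs (-y)) (S.mem_omegan_translate hs' (-x'))
      (by simpa using hzero q hq) (by simpa using hzero q' hq')
  obtain ⟨hpp', hyx'⟩ := S.eq_and_eq_of_translate_eq hp hp' hsame
  exact ⟨hpp', by simpa [c, S.lam_pow_ne_zero n] using hyx'⟩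

lemma relTrans_Eset (n : ℕ) (p : Tile d) (x y : Pt d) :
    relTrans (S.Eset n p x y) = S.Eset n p y x := by
  ext ⟨T₁, T₂⟩
  exact ⟨fun ⟨T, hT, hpT, h₁, h₂⟩ => ⟨T, hT, hpT, h₂, h₁⟩,
    fun ⟨T, hT, hpT, h₁, h₂⟩ => ⟨T, hT, hpT, h₂, h₁⟩⟩

lemma eq_and_eq_of_mem_relComp_Eset (hA3 : S.SubBijective) {n : ℕ}
    {p p' : Tile d} (hp : p ∈ S.proto) (hp' : p' ∈ S.proto) {x y x' y' : Pt d}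
    (hy : y ∈ S.Punc n p) (hx' : x' ∈ S.Punc n p') {TT : Set (Tile d) × Set (Tile d)}
    (hTT : TT ∈ relComp (S.Eset n p x y) (S.Eset n p' x' y')) : p = p' ∧ y = x' := by
  obtain ⟨_, ⟨T, hT, hpT, -, h₁⟩, ⟨T', hT', hp'T', h₂, -⟩⟩ := hTT
  exact S.eq_and_eq_of_translateSet_subIter_eq hA3 hp hp' hy hx' hT.1 hT'.1 hpT hp'T'
    (h₁.symm.trans h₂)

lemma relComp_Eset (hA3 : S.SubBijective) (n : ℕ) (p : Tile d) (x y y' : Pt d) :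
    relComp (S.Eset n p x y) (S.Eset n p y y') = S.Eset n p x y' := by
  ext ⟨T₁, T₂⟩
  constructor
  · rintro ⟨_, ⟨T, hT, hpT, h₁, h⟩, ⟨T', hT', -, h', h₂⟩⟩
    have hTT' : T = T' := S.subIter_injOn hA3 n hT.1 hT'.1
      (translateSet_injective (-y) (h.symm.trans h'))
    exact ⟨T, hT, hpT, h₁, hTT' ▸ h₂⟩
  · rintro ⟨T, hT, hpT, h₁, h₂⟩
    exact ⟨translateSet (S.subIter n T) (-y), ⟨T, hT, hpT, h₁, rfl⟩, ⟨T, hT, hpT, rfl, h₂⟩⟩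

end SubstSystem

end

theorem stmt16_general {d : ℕ} (S : SubstSystem d)
    (hA3 : S.SubBijective)
    (n : ℕ) (p : Tile d) (hp : p ∈ S.proto) (p' : Tile d) (hp' : p' ∈ S.proto)
    (x : Pt d) (y : Pt d) (hy : y ∈ S.Punc n p)
    (x' : Pt d) (hx' : x' ∈ S.Punc n p') (y' : Pt d) :
    (p ≠ p' → relComp (S.Eset n p x y) (S.Eset n p' x' y') = ∅) ∧
    (p = p' → y ≠ x' → relComp (S.Eset n p x y) (S.Eset n p' x' y') = ∅) ∧
    (p = p' → y = x' → relComp (S.Eset n p x y) (S.Eset n p' x' y') = S.Eset n p x y') ∧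
    relTrans (S.Eset n p x y) = S.Eset n p y x := by
  have hcomposable := fun TT (hTT : TT ∈ relComp (S.Eset n p x y) (S.Eset n p' x' y')) =>
    S.eq_and_eq_of_mem_relComp_Eset hA3 hp hp' hy hx' hTT
  refine ⟨fun hne => ?_, fun _ hne => ?_, fun hpp' hyx' => ?_, S.relTrans_Eset n p x y⟩
  · exact Set.eq_empty_of_forall_notMem fun TT hTT => hne (hcomposable TT hTT).1
  · exact Set.eq_empty_of_forall_notMem fun TT hTT => hne (hcomposable TT hTT).2
  · subst hpp' hyx'
    exact S.relComp_Eset hA3 n p x y y'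

/-- Composition rules for the graphs `E^n_p(x, y)`:
`E^n_p(x,y) ∘ E^n_{p'}(x',y')` is empty if `p ≠ p'`, empty if `p = p'` and `y ≠ x'`,
and equals `E^n_p(x, y')` if `p = p'` and `y = x'`; the transpose of `E^n_p(x,y)` is
`E^n_p(y,x)`. -/
theorem stmt16 {d : ℕ} (hd : 1 ≤ d) (S : SubstSystem d)
    (hA1 : S.Primitive) (hA2 : S.FLC) (hA3 : S.SubBijective)
    (n : ℕ) (p : Tile d) (hp : p ∈ S.proto) (p' : Tile d) (hp' : p' ∈ S.proto)
    (x : Pt d) (hx : x ∈ S.Punc n p) (y : Pt d) (hy : y ∈ S.Punc n p)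
    (x' : Pt d) (hx' : x' ∈ S.Punc n p') (y' : Pt d) (hy' : y' ∈ S.Punc n p') :
    (p ≠ p' → relComp (S.Eset n p x y) (S.Eset n p' x' y') = ∅) ∧
    (p = p' → y ≠ x' → relComp (S.Eset n p x y) (S.Eset n p' x' y') = ∅) ∧
    (p = p' → y = x' → relComp (S.Eset n p x y) (S.Eset n p' x' y') = S.Eset n p x y') ∧
    relTrans (S.Eset n p x y) = S.Eset n p y x :=
  stmt16_general S hA3 n p hp p' hp' x y hy x' hx' y'
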